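/- arXiv:1101.0164 — 2 statements merged into one kernel-verified Lean document; each statement's English description precedes it below -/
import Mathlib

section
/- Let Ψ : [0, σ₀] → [0, ∞) be a nondecreasing function. Then there exist nondecreasing continuously differentiable functions Ψ⁻, Ψ⁺ : [0, σ₀] → [0, ∞) with Ψ⁻(σ) ≤ Ψ(σ) ≤ Ψ⁺(σ) for all σ ∈ [0, σ₀], such that: (1) if σ ↦ Ψ(σ)/σ² is integrable on (0, σ₀], then σ ↦ (Ψ⁺)'(σ)/σ is integrable on (0, σ₀]; and (2) if σ ↦ Ψ(σ)/σ² is not integrable on (0, σ₀], then σ ↦ (Ψ⁻)'(σ)/σ is not integrable on (0, σ₀]. -/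
open MeasureTheory Real Set Filter
open scoped Topology

/-!
Averaging twice over `[x/2, x]` turns a nondecreasing `F` that vanishes on `(-∞, 0]` into a
nondecreasing function `Φ` with `F (x/4) ≤ Φ x ≤ F x` and `0 ≤ Φ' x ≤ 2 F x / x`, which is `C¹` on
all of `ℝ` as soon as `F x = o(x)`. The bound on `Φ'` makes `Φ' x / x` integrable whenever
`F x / x²` is, and integration by parts, `∫ Φ'/x = [Φ/x] + ∫ Φ/x²`, gives the converse.

For `Ψ⁺` we smooth `Ψ(4·)`, which is `o(σ)` when `Ψ/σ²` is integrable. For `Ψ⁻` we smooth `Ψ`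
itself if `Ψ = o(σ)`. Otherwise `Ψ τₖ ≥ c τₖ` along a sequence with `2 τₖ₊₁ ≤ τₖ`, and the staircase
`σ ↦ sup {c τₖ / (k+1) | τₖ ≤ σ}` is an `o(σ)` minorant of `Ψ` whose integral against `σ⁻²`
diverges like the harmonic series, one term per block `(τₖ, 2τₖ]`.
-/

theorem Monotone.nonneg_of_eq_zero_of_nonpos {F : ℝ → ℝ} (hF : Monotone F)
    (hF0 : ∀ x ≤ 0, F x = 0) (x : ℝ) : 0 ≤ F x :=
  hF0 (min x 0) (min_le_right x 0) ▸ hF (min_le_left x 0)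

/-- The mean of `F` over `[x/2, x]` (see `avg_eq`), written so that monotonicity in `x` is
pointwise. -/
noncomputable def avg (F : ℝ → ℝ) (x : ℝ) : ℝ := 2 * ∫ u in (1/2 : ℝ)..1, F (x * u)

noncomputable def avgDeriv (F : ℝ → ℝ) (x : ℝ) : ℝ := (2 * F x - F (x / 2) - avg F x) / x

section Average

variable {F : ℝ → ℝ}

theorem Monotone.intervalIntegrable_comp_mul_left (hF : Monotone F) (x a b : ℝ) :
    IntervalIntegrable (fun u => F (x * u)) volume a b := by
  rcases le_total 0 x with hx | hx
  · exact (hF.comp fun u v huv => mul_le_mul_of_nonneg_left huv hx).intervalIntegrable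
  · exact (hF.comp_antitone fun u v huv => mul_le_mul_of_nonpos_left huv hx).intervalIntegrable

theorem avg_eq {x : ℝ} (hx : x ≠ 0) : avg F x = 2 * (∫ t in x / 2..x, F t) / x := by
  rw [avg, intervalIntegral.integral_comp_mul_left (fun t => F t) hx, smul_eq_mul]
  field_simp

theorem monotone_avg (hF : Monotone F) : Monotone (avg F) := fun x y hxy => by
  have := intervalIntegral.integral_mono_on (by norm_num : (1/2 : ℝ) ≤ 1)
    (hF.intervalIntegrable_comp_mul_left x _ _) (hF.intervalIntegrable_comp_mul_left y _ _)
    fun u hu => hF (mul_le_mul_of_nonneg_right hxy (by linarith [hu.1]))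
  unfold avg; linarith

theorem avg_le (hF : Monotone F) {x : ℝ} (hx : 0 ≤ x) : avg F x ≤ F x := by
  have := intervalIntegral.integral_mono_on (by norm_num : (1/2 : ℝ) ≤ 1)
    (hF.intervalIntegrable_comp_mul_left x _ _) intervalIntegrable_const
    fun u hu => hF (mul_le_of_le_one_right hx hu.2)
  rw [intervalIntegral.integral_const, smul_eq_mul] at this
  unfold avg; linarith

theorem le_avg (hF : Monotone F) {x : ℝ} (hx : 0 ≤ x) : F (x / 2) ≤ avg F x := by
  have := intervalIntegral.integral_mono_on (by norm_num : (1/2 : ℝ) ≤ 1)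
    intervalIntegrable_const (hF.intervalIntegrable_comp_mul_left x _ _)
    fun u hu => hF (show x / 2 ≤ x * u by nlinarith [hu.1])
  rw [intervalIntegral.integral_const, smul_eq_mul] at this
  unfold avg; linarith

theorem avg_eq_zero (hF0 : ∀ x ≤ 0, F x = 0) {x : ℝ} (hx : x ≤ 0) : avg F x = 0 := by
  have : ∀ u ∈ uIcc (1/2 : ℝ) 1, F (x * u) = 0 := fun u hu => by
    rw [uIcc_of_le (by norm_num)] at hu
    exact hF0 _ (mul_nonpos_of_nonpos_of_nonneg hx (by linarith [hu.1]))
  rw [avg, intervalIntegral.integral_congr this]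
  simp

theorem continuousOn_avg (hF : Monotone F) : ContinuousOn (avg F) (Ioi 0) := by
  have hP : Continuous fun y => ∫ t in (0 : ℝ)..y, F t :=
    intervalIntegral.continuous_primitive (fun _ _ => hF.intervalIntegrable) 0
  refine ContinuousOn.congr (f := fun y => 2 * ((∫ t in (0 : ℝ)..y, F t) -
      ∫ t in (0 : ℝ)..y / 2, F t) / y) ?_ fun y hy => ?_
  · exact ((continuous_const.mul (hP.sub (hP.comp (continuous_id.div_const 2)))).continuousOn.div
      continuousOn_id fun y hy => ne_of_gt hy)
  · dsimp only
    rw [avg_eq (ne_of_gt hy), intervalIntegral.integral_interval_sub_left hF.intervalIntegrable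
      hF.intervalIntegrable]

theorem hasDerivAt_avg (hF : Monotone F) {x : ℝ} (hx : 0 < x) (hFx : ContinuousAt F x)
    (hFx2 : ContinuousAt F (x / 2)) : HasDerivAt (avg F) (avgDeriv F x) x := by
  set P : ℝ → ℝ := fun y => ∫ t in (0 : ℝ)..y, F t
  have hP : ∀ y, ContinuousAt F y → HasDerivAt P (F y) y := fun y hy =>
    intervalIntegral.integral_hasDerivAt_right hF.intervalIntegrable
      hF.measurable.stronglyMeasurable.stronglyMeasurableAtFilter hy
  have hP2 : HasDerivAt (fun y => P (y / 2)) (F (x / 2) * (1 / 2)) x :=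
    (hP (x / 2) hFx2).comp (h := fun y => y / 2) x ((hasDerivAt_id' x).div_const 2)
  have hQ : HasDerivAt (fun y => 2 * (P y - P (y / 2)) / y)
      ((2 * (F x - F (x / 2) * (1 / 2)) * x - 2 * (P x - P (x / 2)) * 1) / x ^ 2) x :=
    (((hP x hFx).sub hP2).const_mul 2).div (hasDerivAt_id' x) hx.ne'
  have heq : avg F =ᶠ[𝓝 x] fun y => 2 * (P y - P (y / 2)) / y := by
    filter_upwards [Ioi_mem_nhds hx] with y hy
    rw [avg_eq (ne_of_gt hy), intervalIntegral.integral_interval_sub_left hF.intervalIntegrable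
      hF.intervalIntegrable]
  refine (hQ.congr_of_eventuallyEq heq).congr_deriv ?_
  rw [avgDeriv, heq.eq_of_nhds]
  field_simp

theorem continuousOn_avgDeriv (hF : Monotone F) (hc : ContinuousOn F (Ioi 0)) :
    ContinuousOn (avgDeriv F) (Ioi 0) := by
  have hhalf : ContinuousOn (fun y => F (y / 2)) (Ioi 0) :=
    hc.comp (continuousOn_id.div_const 2) fun y (hy : 0 < y) => show 0 < y / 2 by positivity
  exact (((continuousOn_const.mul hc).sub hhalf).sub (continuousOn_avg hF)).div continuousOn_id
    fun y hy => ne_of_gt hy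

theorem avgDeriv_eq_zero (hF0 : ∀ x ≤ 0, F x = 0) {x : ℝ} (hx : x ≤ 0) : avgDeriv F x = 0 := by
  simp [avgDeriv, hF0 x hx, hF0 (x / 2) (by linarith), avg_eq_zero hF0 hx]

theorem avgDeriv_nonneg (hF : Monotone F) (hF0 : ∀ x ≤ 0, F x = 0) (x : ℝ) :
    0 ≤ avgDeriv F x := by
  rcases le_or_gt x 0 with hx | hx
  · exact (avgDeriv_eq_zero hF0 hx).ge
  · have := hF (by linarith : x / 2 ≤ x)
    have := avg_le hF hx.le
    exact div_nonneg (by linarith) hx.le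

theorem avgDeriv_le (hF : Monotone F) (hF0 : ∀ x ≤ 0, F x = 0) {x : ℝ} (hx : 0 < x) :
    avgDeriv F x ≤ 2 * F x / x := by
  have := hF.nonneg_of_eq_zero_of_nonpos hF0 (x / 2)
  have := (monotone_avg hF).nonneg_of_eq_zero_of_nonpos (fun _ => avg_eq_zero hF0) x
  exact div_le_div_of_nonneg_right (by linarith) hx.le

end Average

section Integrability

variable {F : ℝ → ℝ}

theorem Monotone.integrableOn_div_sq_Ioc (hF : Monotone F) {a b : ℝ} (ha : 0 < a) :
    IntegrableOn (fun x => F x / x ^ 2) (Ioc a b) := by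
  simp_rw [div_eq_mul_inv]
  refine (IntegrableOn.mul_continuousOn (hF.locallyIntegrable.integrableOn_isCompact
    isCompact_Icc) ?_ isCompact_Icc).mono_set Ioc_subset_Icc_self
  exact (continuousOn_pow 2).inv₀ fun x hx => pow_ne_zero 2 (by linarith [hx.1])

theorem Monotone.integrableOn_div_sq_Ioc_zero_of_le (hF : Monotone F) {a b : ℝ} (ha : 0 < a)
    (hab : a ≤ b) (h : IntegrableOn (fun x => F x / x ^ 2) (Ioc 0 a)) :
    IntegrableOn (fun x => F x / x ^ 2) (Ioc 0 b) :=
  Ioc_union_Ioc_eq_Ioc ha.le hab ▸ h.union (hF.integrableOn_div_sq_Ioc ha)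

theorem integrableOn_Ioc_zero_comp_mul_left_iff (g : ℝ → ℝ) {b c : ℝ} (hb : 0 ≤ b) (hc : 0 < c) :
    IntegrableOn (fun x => g (c * x)) (Ioc 0 b) ↔ IntegrableOn g (Ioc 0 (c * b)) := by
  rw [← intervalIntegrable_iff_integrableOn_Ioc_of_le hb,
    ← intervalIntegrable_iff_integrableOn_Ioc_of_le (by positivity)]
  have := IntervalIntegrable.comp_mul_left_iff (f := g) (a := 0) (b := c * b) hc.ne'
  rwa [zero_div, mul_div_cancel_left₀ b hc.ne'] at this

theorem integrableOn_comp_mul_div_sq_iff (g : ℝ → ℝ) {b c : ℝ} (hb : 0 ≤ b) (hc : 0 < c) :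
    IntegrableOn (fun x => g (c * x) / x ^ 2) (Ioc 0 b) ↔
      IntegrableOn (fun x => g x / x ^ 2) (Ioc 0 (c * b)) := by
  have : (fun x => g (c * x) / x ^ 2) = fun x => c ^ 2 * (g (c * x) / (c * x) ^ 2) := by
    ext x
    rcases eq_or_ne x 0 with rfl | hx
    · simp
    · field_simp
  rw [this, IntegrableOn, integrable_const_mul_iff (by positivity : c ^ 2 ≠ 0).isUnit,
    ← IntegrableOn, integrableOn_Ioc_zero_comp_mul_left_iff (fun x => g x / x ^ 2) hb hc]

theorem integrableOn_Ioc_of_eventually_integral_le {h : ℝ → ℝ} {a b C : ℝ}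
    (hnn : ∀ x ∈ Ioc a b, 0 ≤ h x) (hloc : ∀ ε > a, IntegrableOn h (Ioc ε b))
    (hle : ∀ᶠ ε in 𝓝[>] a, ∫ x in ε..b, h x ≤ C) : IntegrableOn h (Ioc a b) := by
  rcases le_or_gt b a with hba | hab
  · simp [Ioc_eq_empty_of_le hba]
  have hgt : ∀ n : ℕ, a < a + 1 / (n + 1) := fun n => by
    linarith [Nat.one_div_pos_of_nat (α := ℝ) (n := n)]
  have hseq : Tendsto (fun n : ℕ => a + 1 / (n + 1)) atTop (𝓝[>] a) :=
    tendsto_nhdsWithin_iff.2 ⟨by simpa using tendsto_one_div_add_atTop_nhds_zero_nat.const_add a,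
      Eventually.of_forall hgt⟩
  refine integrableOn_Ioc_of_intervalIntegral_norm_bounded_left (I := C) (fun n => hloc _ (hgt n))
    (tendsto_nhdsWithin_iff.1 hseq).1 ?_
  filter_upwards [hseq.eventually (hle.and (Ioo_mem_nhdsGT hab))] with n ⟨hn, hna, hnb⟩
  rw [setIntegral_congr_fun measurableSet_Ioc fun x hx => Real.norm_of_nonneg
    (hnn x ⟨hna.trans hx.1, hx.2⟩), ← intervalIntegral.integral_of_le hnb.le]
  exact hn

theorem integral_div_sq_eq_of_hasDerivAt {Φ Φ' : ℝ → ℝ} {a b : ℝ} (ha : 0 < a) (hab : a ≤ b)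
    (hΦ : ∀ x ∈ Icc a b, HasDerivAt Φ (Φ' x) x) (hΦ' : ContinuousOn Φ' (Icc a b)) :
    ∫ x in a..b, Φ x / x ^ 2 = Φ a / a - Φ b / b + ∫ x in a..b, Φ' x / x := by
  have hpos : ∀ x ∈ uIcc a b, 0 < x := fun x hx => by
    rw [uIcc_of_le hab] at hx; linarith [hx.1]
  have hv : ∀ x ∈ uIcc a b, HasDerivAt (fun y => -y⁻¹) ((x ^ 2)⁻¹) x := fun x hx => by
    have := (hasDerivAt_inv (hpos x hx).ne').neg
    rwa [neg_neg] at this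
  have hparts := intervalIntegral.integral_mul_deriv_eq_deriv_mul (fun x hx => hΦ x
    (uIcc_of_le hab ▸ hx)) hv ((uIcc_of_le hab ▸ hΦ').intervalIntegrable)
    (ContinuousOn.intervalIntegrable ((continuousOn_pow 2).inv₀ fun x hx =>
      (pow_pos (hpos x hx) 2).ne'))
  simp only [← div_eq_mul_inv, mul_neg, ← div_eq_mul_inv, intervalIntegral.integral_neg] at hparts
  rw [hparts]
  ring

end Integrability

section DoubleAverage

variable {F : ℝ → ℝ}

theorem avg_avg_le (hF : Monotone F) (hF0 : ∀ x ≤ 0, F x = 0) (x : ℝ) : avg (avg F) x ≤ F x := by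
  rcases le_total x 0 with hx | hx
  · rw [avg_eq_zero (fun _ => avg_eq_zero hF0) hx, hF0 x hx]
  · exact (avg_le (monotone_avg hF) hx).trans (avg_le hF hx)

theorem le_avg_avg (hF : Monotone F) {x : ℝ} (hx : 0 ≤ x) : F (x / 4) ≤ avg (avg F) x :=
  calc F (x / 4) = F (x / 2 / 2) := by ring_nf
    _ ≤ avg F (x / 2) := le_avg hF (by positivity)
    _ ≤ avg (avg F) x := le_avg (monotone_avg hF) hx

theorem avgDeriv_avg_le (hF : Monotone F) (hF0 : ∀ x ≤ 0, F x = 0) {x : ℝ} (hx : 0 < x) :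
    avgDeriv (avg F) x ≤ 2 * F x / x :=
  (avgDeriv_le (monotone_avg hF) (fun _ => avg_eq_zero hF0) hx).trans
    (div_le_div_of_nonneg_right (by linarith [avg_le hF hx.le]) hx.le)

theorem hasDerivAt_avg_avg (hF : Monotone F) (hF0 : ∀ x ≤ 0, F x = 0) (ho : F =o[𝓝 0] id)
    (x : ℝ) : HasDerivAt (avg (avg F)) (avgDeriv (avg F) x) x := by
  have hF0' : ∀ x ≤ 0, avg F x = 0 := fun _ => avg_eq_zero hF0
  rcases lt_trichotomy x 0 with hx | rfl | hx
  · rw [avgDeriv_eq_zero hF0' hx.le]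
    refine (hasDerivAt_const x 0).congr_of_eventuallyEq ?_
    filter_upwards [Iio_mem_nhds hx] with y hy using avg_eq_zero hF0' (le_of_lt hy)
  · rw [avgDeriv_eq_zero hF0' le_rfl, hasDerivAt_iff_isLittleO_nhds_zero]
    simp only [zero_add, avg_eq_zero hF0' le_rfl, sub_zero, smul_zero]
    refine (Asymptotics.isBigO_of_le _ fun y => ?_).trans_isLittleO ho
    have := (monotone_avg (monotone_avg hF)).nonneg_of_eq_zero_of_nonpos
      (fun _ => avg_eq_zero hF0') y
    rw [Real.norm_of_nonneg this, Real.norm_of_nonneg (hF.nonneg_of_eq_zero_of_nonpos hF0 y)]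
    exact avg_avg_le hF hF0 y
  · exact hasDerivAt_avg (monotone_avg hF) hx ((continuousOn_avg hF).continuousAt (Ioi_mem_nhds hx))
      ((continuousOn_avg hF).continuousAt (Ioi_mem_nhds (half_pos hx)))

theorem continuous_avgDeriv_avg (hF : Monotone F) (hF0 : ∀ x ≤ 0, F x = 0) (ho : F =o[𝓝 0] id) :
    Continuous (avgDeriv (avg F)) := by
  have hF0' : ∀ x ≤ 0, avg F x = 0 := fun _ => avg_eq_zero hF0
  rw [continuous_iff_continuousAt]
  intro x
  rcases lt_trichotomy x 0 with hx | rfl | hx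
  · refine continuousAt_const.congr (f := fun _ => (0 : ℝ)) ?_
    filter_upwards [Iio_mem_nhds hx] with y hy using (avgDeriv_eq_zero hF0' (le_of_lt hy)).symm
  · have hbound : ∀ y, ‖avgDeriv (avg F) y‖ ≤ 2 * ‖F y / y‖ := fun y => by
      rcases le_or_gt y 0 with hy | hy
      · rw [avgDeriv_eq_zero hF0' hy, norm_zero]; positivity
      · rw [Real.norm_of_nonneg (avgDeriv_nonneg (monotone_avg hF) hF0' y), Real.norm_of_nonneg
          (div_nonneg (hF.nonneg_of_eq_zero_of_nonpos hF0 y) hy.le), ← mul_div_assoc]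
        exact avgDeriv_avg_le hF hF0 hy
    rw [ContinuousAt, avgDeriv_eq_zero hF0' le_rfl]
    exact squeeze_zero_norm hbound (by simpa using (ho.tendsto_div_nhds_zero.norm.const_mul 2))
  · exact (continuousOn_avgDeriv (monotone_avg hF) (continuousOn_avg hF)).continuousAt
      (Ioi_mem_nhds hx)

theorem integrableOn_avgDeriv_avg_div (hF : Monotone F) (hF0 : ∀ x ≤ 0, F x = 0) {b : ℝ}
    (h : IntegrableOn (fun x => F x / x ^ 2) (Ioc 0 b)) :
    IntegrableOn (fun x => avgDeriv (avg F) x / x) (Ioc 0 b) := by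
  have hc : ContinuousOn (fun x => avgDeriv (avg F) x / x) (Ioc 0 b) :=
    ((continuousOn_avgDeriv (monotone_avg hF) (continuousOn_avg hF)).div continuousOn_id
      fun x hx => ne_of_gt hx).mono fun x hx => hx.1
  refine (h.const_mul 2).mono' (hc.aestronglyMeasurable measurableSet_Ioc)
    ((ae_restrict_iff' measurableSet_Ioc).2 (Eventually.of_forall fun x hx => ?_))
  rw [Real.norm_of_nonneg (div_nonneg (avgDeriv_nonneg (monotone_avg hF)
    (fun _ => avg_eq_zero hF0) x) hx.1.le), div_le_iff₀ hx.1]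
  calc avgDeriv (avg F) x ≤ 2 * F x / x := avgDeriv_avg_le hF hF0 hx.1
    _ = 2 * (F x / x ^ 2) * x := by field_simp

theorem integrableOn_avg_avg_div_sq_of_integrableOn_avgDeriv_avg_div (hF : Monotone F)
    (hF0 : ∀ x ≤ 0, F x = 0) (ho : F =o[𝓝 0] id) {b : ℝ} (hb : 0 < b)
    (h : IntegrableOn (fun x => avgDeriv (avg F) x / x) (Ioc 0 b)) :
    IntegrableOn (fun x => avg (avg F) x / x ^ 2) (Ioc 0 b) := by
  set Φ := avg (avg F)
  have hΦ : Monotone Φ := monotone_avg (monotone_avg hF)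
  have hΦ0 : ∀ x ≤ 0, Φ x = 0 := fun _ => avg_eq_zero fun _ => avg_eq_zero hF0
  have hDnn : ∀ x ∈ Ioc 0 b, 0 ≤ avgDeriv (avg F) x / x := fun x hx =>
    div_nonneg (avgDeriv_nonneg (monotone_avg hF) (fun _ => avg_eq_zero hF0) x) hx.1.le
  -- keeps the boundary term `Φ ε / ε` of the integration by parts below `1`
  have hsmall : ∀ᶠ ε in 𝓝[>] 0, Φ ε ≤ ε := by
    filter_upwards [self_mem_nhdsWithin, nhdsWithin_le_nhds (ho.def one_pos)] with ε hε hεF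
    rw [Real.norm_of_nonneg (hF.nonneg_of_eq_zero_of_nonpos hF0 ε), id, one_mul,
      Real.norm_of_nonneg (le_of_lt hε)] at hεF
    exact (avg_avg_le hF hF0 ε).trans hεF
  refine integrableOn_Ioc_of_eventually_integral_le
    (C := 1 + ∫ x in Ioc 0 b, avgDeriv (avg F) x / x)
    (fun x _ => div_nonneg (hΦ.nonneg_of_eq_zero_of_nonpos hΦ0 x) (sq_nonneg x))
    (fun ε hε => hΦ.integrableOn_div_sq_Ioc hε) ?_
  filter_upwards [hsmall, Ioo_mem_nhdsGT hb] with ε hεΦ hε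
  rw [integral_div_sq_eq_of_hasDerivAt hε.1 hε.2.le (fun x _ => hasDerivAt_avg_avg hF hF0 ho x)
    (continuous_avgDeriv_avg hF hF0 ho).continuousOn, intervalIntegral.integral_of_le hε.2.le]
  have h1 : Φ ε / ε ≤ 1 := (div_le_one hε.1).2 hεΦ
  have h2 : 0 ≤ Φ b / b := div_nonneg (hΦ.nonneg_of_eq_zero_of_nonpos hΦ0 b) hb.le
  have h3 : ∫ x in Ioc ε b, avgDeriv (avg F) x / x ≤ ∫ x in Ioc 0 b, avgDeriv (avg F) x / x :=
    setIntegral_mono_set h ((ae_restrict_iff' measurableSet_Ioc).2 (Eventually.of_forall hDnn))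
      (Ioc_subset_Ioc_left hε.1.le).eventuallyLE
  linarith

theorem integrableOn_div_sq_of_integrableOn_avgDeriv_avg_div (hF : Monotone F)
    (hF0 : ∀ x ≤ 0, F x = 0) (ho : F =o[𝓝 0] id) {b : ℝ} (hb : 0 < b)
    (h : IntegrableOn (fun x => avgDeriv (avg F) x / x) (Ioc 0 b)) :
    IntegrableOn (fun x => F x / x ^ 2) (Ioc 0 b) := by
  have hquarter : IntegrableOn (fun x => F (4⁻¹ * x) / x ^ 2) (Ioc 0 b) := by
    refine (integrableOn_avg_avg_div_sq_of_integrableOn_avgDeriv_avg_div hF hF0 ho hb h).mono'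
      ((hF.measurable.comp (measurable_const_mul _)).div
        (measurable_id.pow_const 2)).aestronglyMeasurable
      ((ae_restrict_iff' measurableSet_Ioc).2 (Eventually.of_forall fun x hx => ?_))
    rw [Real.norm_of_nonneg (div_nonneg (hF.nonneg_of_eq_zero_of_nonpos hF0 _) (sq_nonneg x)),
      inv_mul_eq_div]
    exact div_le_div_of_nonneg_right (le_avg_avg hF hx.1.le) (sq_nonneg x)
  rw [integrableOn_comp_mul_div_sq_iff F hb.le (by norm_num)] at hquarter
  exact hF.integrableOn_div_sq_Ioc_zero_of_le (by positivity) (by linarith) hquarter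

end DoubleAverage

theorem exists_seq_halving_of_frequently {P : ℝ → Prop} {b : ℝ} (hb : 0 < b)
    (h : ∃ᶠ x in 𝓝[>] 0, P x) :
    ∃ τ : ℕ → ℝ, (∀ k, 0 < τ k ∧ P (τ k)) ∧ 2 * τ 0 ≤ b ∧ ∀ k, 2 * τ (k + 1) ≤ τ k := by
  have : ∀ δ > 0, ∃ x, P x ∧ x ∈ Ioo 0 δ := fun δ hδ =>
    (h.and_eventually (Ioo_mem_nhdsGT hδ)).exists
  choose! pick hP hpick using this
  let τ : ℕ → ℝ := fun k => Nat.rec (pick (b / 2)) (fun _ t => pick (t / 2)) k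
  have hpos : ∀ k, 0 < τ k := fun k => by
    induction k with
    | zero => exact (hpick _ (half_pos hb)).1
    | succ k ih => exact (hpick _ (half_pos ih)).1
  refine ⟨τ, fun k => ⟨hpos k, ?_⟩, ?_, fun k => ?_⟩
  · cases k with
    | zero => exact hP _ (half_pos hb)
    | succ k => exact hP _ (half_pos (hpos k))
  · linarith [(hpick (b / 2) (half_pos hb)).2, show τ 0 = pick (b / 2) from rfl]
  · linarith [(hpick _ (half_pos (hpos k))).2]

noncomputable def staircase (c : ℝ) (τ : ℕ → ℝ) (x : ℝ) : ℝ :=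
  ⨆ k : ℕ, if τ k ≤ x then c * τ k / (k + 1) else 0

section Staircase

variable {c : ℝ} {τ : ℕ → ℝ}

theorem antitone_of_two_mul_succ_le (hτ : ∀ k, 0 < τ k) (hτ2 : ∀ k, 2 * τ (k + 1) ≤ τ k) :
    Antitone τ :=
  antitone_nat_of_succ_le fun k => by linarith [hτ2 k, hτ (k + 1)]

theorem two_mul_le_of_lt_of_two_mul_succ_le (hτ : ∀ k, 0 < τ k)
    (hτ2 : ∀ k, 2 * τ (k + 1) ≤ τ k) {m n : ℕ} (hmn : m < n) : 2 * τ n ≤ τ m := by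
  obtain ⟨j, rfl⟩ := Nat.exists_eq_add_of_lt hmn
  exact (hτ2 (m + j)).trans (antitone_of_two_mul_succ_le hτ hτ2 (Nat.le_add_right m j))

theorem staircase_bddAbove (hc : 0 ≤ c) (hτ : ∀ k, 0 < τ k) (hτ2 : ∀ k, 2 * τ (k + 1) ≤ τ k)
    (x : ℝ) : BddAbove (range fun k : ℕ => if τ k ≤ x then c * τ k / (k + 1) else 0) := by
  refine ⟨c * τ 0, forall_mem_range.2 fun k => ?_⟩
  split_ifs
  · exact (div_le_self (by positivity [hτ k]) (by simp)).trans
      (by gcongr; exact antitone_of_two_mul_succ_le hτ hτ2 (Nat.zero_le k))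
  · positivity [hτ 0]

theorem le_staircase (hc : 0 ≤ c) (hτ : ∀ k, 0 < τ k) (hτ2 : ∀ k, 2 * τ (k + 1) ≤ τ k) {k : ℕ}
    {x : ℝ} (hk : τ k ≤ x) : c * τ k / (k + 1) ≤ staircase c τ x :=
  le_ciSup_of_le (staircase_bddAbove hc hτ hτ2 x) k (by rw [if_pos hk])

theorem staircase_eq_zero (hτ : ∀ k, 0 < τ k) {x : ℝ} (hx : x ≤ 0) : staircase c τ x = 0 := by
  simp [staircase, fun k => not_le.2 (hx.trans_lt (hτ k))]

theorem monotone_staircase (hc : 0 ≤ c) (hτ : ∀ k, 0 < τ k) (hτ2 : ∀ k, 2 * τ (k + 1) ≤ τ k) :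
    Monotone (staircase c τ) := fun x y hxy =>
  ciSup_mono (staircase_bddAbove hc hτ hτ2 y) fun k => by
    split_ifs with hx hy hy
    · rfl
    · exact absurd (hx.trans hxy) hy
    · positivity [hτ k]
    · rfl

theorem staircase_le {f : ℝ → ℝ} (hf : Monotone f) (hf0 : ∀ x ≤ 0, f x = 0) (hc : 0 ≤ c)
    (hτ : ∀ k, 0 < τ k) (hτf : ∀ k, c * τ k ≤ f (τ k)) (x : ℝ) : staircase c τ x ≤ f x :=
  ciSup_le fun k => by
    split_ifs with hk
    · exact (div_le_self (by positivity [hτ k]) (by simp)).trans ((hτf k).trans (hf hk))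
    · exact hf.nonneg_of_eq_zero_of_nonpos hf0 x

theorem staircase_isLittleO (hc : 0 < c) (hτ : ∀ k, 0 < τ k) (hτ2 : ∀ k, 2 * τ (k + 1) ≤ τ k) :
    staircase c τ =o[𝓝 0] id := by
  refine Asymptotics.IsLittleO.of_bound fun ε hε => ?_
  obtain ⟨m, hm⟩ := exists_nat_gt (c / ε)
  filter_upwards [Iio_mem_nhds (hτ m)] with x hx
  rcases le_or_gt x 0 with hx0 | hx0
  · simp only [staircase_eq_zero hτ hx0, norm_zero]
    positivity
  have hG := (monotone_staircase hc.le hτ hτ2).nonneg_of_eq_zero_of_nonpos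
    (fun _ => staircase_eq_zero hτ) x
  rw [Real.norm_of_nonneg hG, id, Real.norm_of_nonneg hx0.le]
  refine ciSup_le fun k => ?_
  split_ifs with hk
  · have hmk : (m : ℝ) ≤ k := by
      by_contra! hkm
      linarith [two_mul_le_of_lt_of_two_mul_succ_le hτ hτ2 (Nat.cast_lt.1 hkm), hτ m, mem_Iio.1 hx]
    rw [div_lt_iff₀ hε] at hm
    rw [div_le_iff₀ (by positivity)]
    calc c * τ k ≤ c * x := by gcongr
      _ ≤ m * ε * x := by gcongr
      _ ≤ ε * x * (k + 1) := by nlinarith [mul_pos hε hx0]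
  · positivity

theorem not_integrableOn_staircase_div_sq (hc : 0 < c) (hτ : ∀ k, 0 < τ k)
    (hτ2 : ∀ k, 2 * τ (k + 1) ≤ τ k) {b : ℝ} (hb : 2 * τ 0 ≤ b) :
    ¬ IntegrableOn (fun x => staircase c τ x / x ^ 2) (Ioc 0 b) := by
  intro hint
  set s : ℕ → Set ℝ := fun k => Ioc (τ k) (2 * τ k)
  have hdisj : Pairwise (Function.onFun Disjoint s) := (pairwise_disjoint_on s).2 fun m n hmn =>
    (Ioc_disjoint_Ioc_of_le (two_mul_le_of_lt_of_two_mul_succ_le hτ hτ2 hmn)).symm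
  have hsub : ⋃ k, s k ⊆ Ioc 0 b := iUnion_subset fun k x hx =>
    ⟨(hτ k).trans hx.1, by linarith [hx.2, antitone_of_two_mul_succ_le hτ hτ2 (Nat.zero_le k)]⟩
  have hsum := hasSum_integral_iUnion (fun k => measurableSet_Ioc) hdisj (hint.mono_set hsub)
  have hpt : ∀ k, ∀ x ∈ s k, c * τ k / (k + 1) / (2 * τ k) ^ 2 ≤ staircase c τ x / x ^ 2 :=
    fun k x hx => by
      have hx0 : 0 < x := (hτ k).trans hx.1
      calc c * τ k / (k + 1) / (2 * τ k) ^ 2 ≤ c * τ k / (k + 1) / x ^ 2 :=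
            div_le_div_of_nonneg_left (by positivity [hτ k]) (by positivity)
              (pow_le_pow_left₀ hx0.le hx.2 2)
        _ ≤ staircase c τ x / x ^ 2 :=
            div_le_div_of_nonneg_right (le_staircase hc.le hτ hτ2 hx.1.le) (sq_nonneg x)
  have hblock : ∀ k : ℕ, c / 4 * (1 / ((k : ℝ) + 1)) ≤ ∫ x in s k, staircase c τ x / x ^ 2 := by
    intro k
    have hτk := hτ k
    calc c / 4 * (1 / ((k : ℝ) + 1)) = ∫ _ in s k, c * τ k / (k + 1) / (2 * τ k) ^ 2 := by
          rw [setIntegral_const, smul_eq_mul, Real.volume_real_Ioc_of_le (by linarith)]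
          field_simp
          ring
      _ ≤ ∫ x in s k, staircase c τ x / x ^ 2 :=
          setIntegral_mono_on (integrableOn_const measure_Ioc_lt_top.ne)
            (hint.mono_set ((subset_iUnion s k).trans hsub)) measurableSet_Ioc (hpt k)
  have hharm : Summable fun k : ℕ => 1 / ((k : ℝ) + 1) := by
    refine (summable_mul_left_iff (by positivity : c / 4 ≠ 0)).1
      (hsum.summable.of_nonneg_of_le (fun k => by positivity) hblock)
  exact Real.not_summable_one_div_natCast ((summable_nat_add_iff 1).1 (by simpa using hharm))

end Staircase

section Minorant

variable {f : ℝ → ℝ}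

theorem exists_staircase_minorant (hf : Monotone f) (hf0 : ∀ x ≤ 0, f x = 0) {b : ℝ} (hb : 0 < b)
    (hfo : ¬ f =o[𝓝 0] id) :
    ∃ G : ℝ → ℝ, Monotone G ∧ (∀ x ≤ 0, G x = 0) ∧ (∀ x, G x ≤ f x) ∧ G =o[𝓝 0] id ∧
      ¬ IntegrableOn (fun x => G x / x ^ 2) (Ioc 0 b) := by
  obtain ⟨c, hc, hfreq⟩ : ∃ c > 0, ∃ᶠ x in 𝓝[>] 0, c * x ≤ f x := by
    rw [Asymptotics.isLittleO_iff] at hfo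
    push Not at hfo
    obtain ⟨c, hc, h⟩ := hfo
    refine ⟨c, hc, frequently_nhdsWithin_iff.2 (h.mono fun x hx => ?_)⟩
    have hx0 : 0 < x := by
      by_contra! hx0
      rw [hf0 x hx0, norm_zero] at hx
      exact absurd hx (not_lt.2 (by positivity))
    rw [Real.norm_of_nonneg (hf.nonneg_of_eq_zero_of_nonpos hf0 x), id,
      Real.norm_of_nonneg hx0.le] at hx
    exact ⟨hx.le, hx0⟩
  obtain ⟨τ, hτ, hτb, hτ2⟩ := exists_seq_halving_of_frequently hb hfreq
  have hτ0 : ∀ k, 0 < τ k := fun k => (hτ k).1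
  exact ⟨staircase c τ, monotone_staircase hc.le hτ0 hτ2, fun _ => staircase_eq_zero hτ0,
    staircase_le hf hf0 hc.le hτ0 fun k => (hτ k).2, staircase_isLittleO hc hτ0 hτ2,
    not_integrableOn_staircase_div_sq hc hτ0 hτ2 hτb⟩

theorem isLittleO_of_integrableOn_div_sq (hf : Monotone f) (hf0 : ∀ x ≤ 0, f x = 0) {b : ℝ}
    (hb : 0 < b) (h : IntegrableOn (fun x => f x / x ^ 2) (Ioc 0 b)) : f =o[𝓝 0] id := by
  by_contra hfo
  obtain ⟨G, hG, hG0, hGf, -, hGI⟩ := exists_staircase_minorant hf hf0 hb hfo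
  refine hGI (h.mono' (hG.measurable.div (measurable_id.pow_const 2)).aestronglyMeasurable
    (Eventually.of_forall fun x => ?_))
  rw [Real.norm_of_nonneg (div_nonneg (hG.nonneg_of_eq_zero_of_nonpos hG0 x) (sq_nonneg x))]
  exact div_le_div_of_nonneg_right (hGf x) (sq_nonneg x)

theorem exists_isLittleO_minorant (hf : Monotone f) (hf0 : ∀ x ≤ 0, f x = 0) {b : ℝ} (hb : 0 < b)
    (h : ¬ IntegrableOn (fun x => f x / x ^ 2) (Ioc 0 b)) :
    ∃ G : ℝ → ℝ, Monotone G ∧ (∀ x ≤ 0, G x = 0) ∧ (∀ x, G x ≤ f x) ∧ G =o[𝓝 0] id ∧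
      ¬ IntegrableOn (fun x => G x / x ^ 2) (Ioc 0 b) := by
  by_cases hfo : f =o[𝓝 0] id
  · exact ⟨f, hf, hf0, fun _ => le_rfl, hfo, h⟩
  · exact exists_staircase_minorant hf hf0 hb hfo

end Minorant

section Envelopes

variable {Ψ : ℝ → ℝ} {σ₀ : ℝ}

theorem exists_monotone_extension (hσ₀ : 0 < σ₀) (hmono : MonotoneOn Ψ (Icc 0 σ₀))
    (hnonneg : ∀ σ ∈ Icc 0 σ₀, 0 ≤ Ψ σ) :
    ∃ f : ℝ → ℝ, Monotone f ∧ (∀ x ≤ 0, f x = 0) ∧ ∀ x ∈ Ioc 0 σ₀, f x = Ψ x := by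
  refine ⟨fun x => if x ≤ 0 then 0 else Ψ (min x σ₀), fun x y hxy => ?_, fun x hx => if_pos hx,
    fun x hx => by simp [not_le.2 hx.1, min_eq_left hx.2]⟩
  dsimp only
  split_ifs with hx hy hy
  · exact le_rfl
  · exact hnonneg _ ⟨le_min (not_le.1 hy).le hσ₀.le, min_le_right _ _⟩
  · exact absurd (hxy.trans hy) hx
  · exact hmono ⟨le_min (not_le.1 hx).le hσ₀.le, min_le_right _ _⟩
      ⟨le_min (not_le.1 hy).le hσ₀.le, min_le_right _ _⟩ (min_le_min_right _ hxy)

theorem exists_smooth_majorant (hσ₀ : 0 < σ₀) (hmono : MonotoneOn Ψ (Icc 0 σ₀))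
    (hnonneg : ∀ σ ∈ Icc 0 σ₀, 0 ≤ Ψ σ) :
    ∃ Ψp Ψp' : ℝ → ℝ, Monotone Ψp ∧ (∀ x, HasDerivAt Ψp (Ψp' x) x) ∧ Continuous Ψp' ∧
      (∀ σ ∈ Icc 0 σ₀, Ψ σ ≤ Ψp σ) ∧
      (IntegrableOn (fun σ => Ψ σ / σ ^ 2) (Ioc 0 σ₀) →
        IntegrableOn (fun σ => Ψp' σ / σ) (Ioc 0 σ₀)) := by
  by_cases hI : IntegrableOn (fun σ => Ψ σ / σ ^ 2) (Ioc 0 σ₀)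
  swap
  · exact ⟨fun _ => Ψ σ₀, 0, monotone_const, fun x => hasDerivAt_const x _, continuous_const,
      fun σ hσ => hmono hσ ⟨hσ₀.le, le_rfl⟩ hσ.2, fun h => absurd h hI⟩
  obtain ⟨f, hf, hf0, hfΨ⟩ := exists_monotone_extension hσ₀ hmono hnonneg
  have hfI : IntegrableOn (fun x => f x / x ^ 2) (Ioc 0 σ₀) :=
    hI.congr_fun (fun x hx => by rw [hfΨ x hx]) measurableSet_Ioc
  have hΨ0 : Ψ 0 ≤ 0 := by
    have hfo := isLittleO_of_integrableOn_div_sq hf hf0 hσ₀ hfI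
    refine ge_of_tendsto ((hfo.trans_tendsto tendsto_id).mono_left
      (nhdsWithin_le_nhds (s := Ioi 0))) ?_
    filter_upwards [Ioo_mem_nhdsGT hσ₀] with x hx
    rw [hfΨ x ⟨hx.1, hx.2.le⟩]
    exact hmono ⟨le_rfl, hσ₀.le⟩ ⟨hx.1.le, hx.2.le⟩ hx.1.le
  set F : ℝ → ℝ := fun x => f (4 * x)
  have hF : Monotone F := fun x y hxy => hf (by linarith)
  have hF0 : ∀ x ≤ 0, F x = 0 := fun x hx => hf0 _ (by linarith)
  have hFI : IntegrableOn (fun x => F x / x ^ 2) (Ioc 0 σ₀) :=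
    (integrableOn_comp_mul_div_sq_iff f hσ₀.le (by norm_num)).2
      (hf.integrableOn_div_sq_Ioc_zero_of_le hσ₀ (by linarith) hfI)
  have hFo := isLittleO_of_integrableOn_div_sq hF hF0 hσ₀ hFI
  refine ⟨avg (avg F), avgDeriv (avg F), monotone_avg (monotone_avg hF),
    hasDerivAt_avg_avg hF hF0 hFo, continuous_avgDeriv_avg hF hF0 hFo, fun σ hσ => ?_,
    fun _ => integrableOn_avgDeriv_avg_div hF hF0 hFI⟩
  rcases hσ.1.eq_or_lt with rfl | hσ0
  · rwa [avg_eq_zero (fun _ => avg_eq_zero hF0) le_rfl]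
  · calc Ψ σ = F (σ / 4) := by rw [← hfΨ σ ⟨hσ0, hσ.2⟩]; exact congrArg f (by ring)
      _ ≤ avg (avg F) σ := le_avg_avg hF hσ.1

theorem exists_smooth_minorant (hσ₀ : 0 < σ₀) (hmono : MonotoneOn Ψ (Icc 0 σ₀))
    (hnonneg : ∀ σ ∈ Icc 0 σ₀, 0 ≤ Ψ σ) :
    ∃ Ψm Ψm' : ℝ → ℝ, Monotone Ψm ∧ (∀ x, 0 ≤ Ψm x) ∧ (∀ x, HasDerivAt Ψm (Ψm' x) x) ∧
      Continuous Ψm' ∧ (∀ σ ∈ Icc 0 σ₀, Ψm σ ≤ Ψ σ) ∧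
      (¬ IntegrableOn (fun σ => Ψ σ / σ ^ 2) (Ioc 0 σ₀) →
        ¬ IntegrableOn (fun σ => Ψm' σ / σ) (Ioc 0 σ₀)) := by
  by_cases hI : IntegrableOn (fun σ => Ψ σ / σ ^ 2) (Ioc 0 σ₀)
  · exact ⟨0, 0, monotone_const, fun _ => le_rfl, fun x => hasDerivAt_const x 0,
      continuous_const, hnonneg, fun h => absurd hI h⟩
  obtain ⟨f, hf, hf0, hfΨ⟩ := exists_monotone_extension hσ₀ hmono hnonneg
  have hfI : ¬ IntegrableOn (fun x => f x / x ^ 2) (Ioc 0 σ₀) := fun h =>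
    hI (h.congr_fun (fun x hx => by simp only [hfΨ x hx]) measurableSet_Ioc)
  obtain ⟨G, hG, hG0, hGf, hGo, hGI⟩ := exists_isLittleO_minorant hf hf0 hσ₀ hfI
  have hΦ := monotone_avg (monotone_avg hG)
  refine ⟨avg (avg G), avgDeriv (avg G), hΦ,
    hΦ.nonneg_of_eq_zero_of_nonpos fun _ => avg_eq_zero fun _ => avg_eq_zero hG0,
    hasDerivAt_avg_avg hG hG0 hGo, continuous_avgDeriv_avg hG hG0 hGo, fun σ hσ => ?_,
    fun _ h => hGI (integrableOn_div_sq_of_integrableOn_avgDeriv_avg_div hG hG0 hGo hσ₀ h)⟩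
  refine ((avg_avg_le hG hG0 σ).trans (hGf σ)).trans ?_
  rcases hσ.1.eq_or_lt with rfl | hσ0
  · rw [hf0 0 le_rfl]; exact hnonneg 0 hσ
  · exact (hfΨ σ ⟨hσ0, hσ.2⟩).le

end Envelopes

/-- Lemma 2.4: any nondecreasing `Ψ : [0,σ₀] → [0,∞)` can be squeezed
between nondecreasing `C¹` functions `Ψ⁻ ≤ Ψ ≤ Ψ⁺` such that integrability of `Ψ(σ)/σ²`
on `(0,σ₀]` entails integrability of `(Ψ⁺)'(σ)/σ`, and non-integrability of `Ψ(σ)/σ²`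
entails non-integrability of `(Ψ⁻)'(σ)/σ`. -/
theorem statement6 (σ₀ : ℝ) (hσ₀ : 0 < σ₀) (Ψ : ℝ → ℝ)
    (hmono : MonotoneOn Ψ (Set.Icc 0 σ₀))
    (hnonneg : ∀ σ ∈ Set.Icc (0 : ℝ) σ₀, 0 ≤ Ψ σ) :
    ∃ Ψm Ψp Ψm' Ψp' : ℝ → ℝ,
      MonotoneOn Ψm (Set.Icc 0 σ₀) ∧ MonotoneOn Ψp (Set.Icc 0 σ₀) ∧
      (∀ σ ∈ Set.Icc (0 : ℝ) σ₀, 0 ≤ Ψm σ) ∧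
      (∀ σ ∈ Set.Icc (0 : ℝ) σ₀, HasDerivWithinAt Ψm (Ψm' σ) (Set.Icc 0 σ₀) σ) ∧
      (∀ σ ∈ Set.Icc (0 : ℝ) σ₀, HasDerivWithinAt Ψp (Ψp' σ) (Set.Icc 0 σ₀) σ) ∧
      ContinuousOn Ψm' (Set.Icc 0 σ₀) ∧ ContinuousOn Ψp' (Set.Icc 0 σ₀) ∧
      (∀ σ ∈ Set.Icc (0 : ℝ) σ₀, Ψm σ ≤ Ψ σ ∧ Ψ σ ≤ Ψp σ) ∧
      (IntegrableOn (fun σ => Ψ σ / σ ^ 2) (Set.Ioc 0 σ₀) →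
        IntegrableOn (fun σ => Ψp' σ / σ) (Set.Ioc 0 σ₀)) ∧
      (¬ IntegrableOn (fun σ => Ψ σ / σ ^ 2) (Set.Ioc 0 σ₀) →
        ¬ IntegrableOn (fun σ => Ψm' σ / σ) (Set.Ioc 0 σ₀)) := by
  obtain ⟨Ψp, Ψp', hp, hpd, hpc, hΨp, hpI⟩ := exists_smooth_majorant hσ₀ hmono hnonneg
  obtain ⟨Ψm, Ψm', hm, hm0, hmd, hmc, hΨm, hmI⟩ := exists_smooth_minorant hσ₀ hmono hnonneg
  exact ⟨Ψm, Ψp, Ψm', Ψp', hm.monotoneOn _, hp.monotoneOn _, fun σ _ => hm0 σ,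
    fun σ _ => (hmd σ).hasDerivWithinAt, fun σ _ => (hpd σ).hasDerivWithinAt, hmc.continuousOn,
    hpc.continuousOn, fun σ hσ => ⟨hΨm σ hσ, hΨp σ hσ⟩, hpI, hmI⟩
end

section
/- Let ω : (0,1] → (0,∞) be continuous and increasing with σ ↦ ω(σ)/σ decreasing, and define φ(s) = ∫₀^s exp(−∫_t^1 (ω(τ)/τ) dτ) dt for s ∈ [0,1]. Then φ(0) = 0, φ > 0 on (0,1], φ is twice differentiable on (0,1) and satisfies the equation −φ''(s) + (ω(s)/s)·φ'(s) = 0 for all s ∈ (0,1). Moreover, if ω is not Dini continuous at zero, i.e. ∫₀^1 (ω(τ)/τ) dτ = +∞, then the right derivative of φ at 0 equals 0, i.e. lim_{s→0⁺} φ(s)/s = 0. -/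
/-!
With `F(t) = ∫_t^1 ω(τ)/τ dτ` we have `φ' = exp (-F)` and `F' = -ω(s)/s`, which is the equation
`φ'' = (ω(s)/s) φ'`. Since `F ≥ 0` decreases, `φ'` increases and is at most `1`, so `φ` is well
defined, positive, and `φ(s) ≤ s φ'(s)`. If `ω` is not Dini continuous then `F(t) → ∞` as `t → 0⁺`
(a bounded `F` would make `ω(τ)/τ` integrable on `(0,1]`), hence `φ(s)/s ≤ φ'(s) → 0`.
-/

open MeasureTheory Real Set Filter
open scoped ENNReal Topology

noncomputable section

/-- The one-dimensional barrier `φ(s) = ∫₀^s exp(-∫_t^1 ω(τ)/τ dτ) dt`. -/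
def phiBar (ω : ℝ → ℝ) (s : ℝ) : ℝ :=
  ∫ t in Set.Ioc (0 : ℝ) s, Real.exp (-(∫ τ in Set.Ioc t 1, ω τ / τ))

def tailIntegral (b : ℝ → ℝ) (t : ℝ) : ℝ := ∫ τ in Ioc t 1, b τ

def barrierDensity (b : ℝ → ℝ) (t : ℝ) : ℝ := exp (-tailIntegral b t)

def barrier (b : ℝ → ℝ) (s : ℝ) : ℝ := ∫ t in Ioc 0 s, barrierDensity b t

lemma barrierDensity_pos (b : ℝ → ℝ) (t : ℝ) : 0 < barrierDensity b t := exp_pos _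

lemma phiBar_eq_barrier (ω : ℝ → ℝ) : phiBar ω = barrier (fun τ => ω τ / τ) := rfl

section

variable {b : ℝ → ℝ}

lemma integrableOn_Ioc_one_of_continuousOn (hb : ContinuousOn b (Ioc 0 1)) {t : ℝ} (ht : 0 < t) :
    IntegrableOn b (Ioc t 1) :=
  (hb.mono fun _ hx => ⟨ht.trans_le hx.1, hx.2⟩).integrableOn_Icc.mono_set Ioc_subset_Icc_self

lemma tailIntegral_nonneg (hb0 : ∀ τ ∈ Ioc (0 : ℝ) 1, 0 ≤ b τ) {t : ℝ} (ht : 0 < t) :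
    0 ≤ tailIntegral b t :=
  setIntegral_nonneg measurableSet_Ioc fun τ hτ => hb0 τ ⟨ht.trans hτ.1, hτ.2⟩

lemma tailIntegral_antitoneOn (hb : ContinuousOn b (Ioc 0 1))
    (hb0 : ∀ τ ∈ Ioc (0 : ℝ) 1, 0 ≤ b τ) : AntitoneOn (tailIntegral b) (Ioi 0) := by
  intro t ht s _ hts
  refine setIntegral_mono_set (integrableOn_Ioc_one_of_continuousOn hb ht) ?_
    (Ioc_subset_Ioc_left hts).eventuallyLE
  filter_upwards [self_mem_ae_restrict measurableSet_Ioc] with τ hτ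
  exact hb0 τ ⟨lt_trans ht hτ.1, hτ.2⟩

lemma hasDerivAt_tailIntegral (hb : ContinuousOn b (Ioc 0 1)) {s : ℝ} (hs : s ∈ Ioo (0 : ℝ) 1) :
    HasDerivAt (tailIntegral b) (-b s) s := by
  have hbo : ContinuousOn b (Ioo 0 1) := hb.mono Ioo_subset_Ioc_self
  have hint : IntervalIntegrable b volume s 1 :=
    (intervalIntegrable_iff_integrableOn_Ioc_of_le hs.2.le).2
      (integrableOn_Ioc_one_of_continuousOn hb hs.1)
  refine (intervalIntegral.integral_hasDerivAt_left hint
    (hbo.stronglyMeasurableAtFilter isOpen_Ioo s hs)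
    (hbo.continuousAt (Ioo_mem_nhds hs.1 hs.2))).congr_of_eventuallyEq ?_
  filter_upwards [Iio_mem_nhds hs.2] with u hu
  rw [tailIntegral, intervalIntegral.integral_of_le hu.le]

lemma hasDerivAt_barrierDensity (hb : ContinuousOn b (Ioc 0 1)) {s : ℝ}
    (hs : s ∈ Ioo (0 : ℝ) 1) : HasDerivAt (barrierDensity b) (barrierDensity b s * b s) s := by
  have := (hasDerivAt_tailIntegral hb hs).neg.exp
  rwa [neg_neg] at this

lemma barrierDensity_monotoneOn (hb : ContinuousOn b (Ioc 0 1))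
    (hb0 : ∀ τ ∈ Ioc (0 : ℝ) 1, 0 ≤ b τ) : MonotoneOn (barrierDensity b) (Ioi 0) :=
  fun _ ht _ hs hts => exp_le_exp.2 (neg_le_neg (tailIntegral_antitoneOn hb hb0 ht hs hts))

lemma integrableOn_barrierDensity (hb : ContinuousOn b (Ioc 0 1))
    (hb0 : ∀ τ ∈ Ioc (0 : ℝ) 1, 0 ≤ b τ) (s : ℝ) : IntegrableOn (barrierDensity b) (Ioc 0 s) := by
  have hmono : MonotoneOn (barrierDensity b) (Ioc 0 s) :=
    (barrierDensity_monotoneOn hb hb0).mono fun _ ht => ht.1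
  refine IntegrableOn.of_bound measure_Ioc_lt_top
    (aemeasurable_restrict_of_monotoneOn measurableSet_Ioc hmono).aestronglyMeasurable 1 ?_
  filter_upwards [self_mem_ae_restrict measurableSet_Ioc] with t ht
  rw [norm_of_nonneg (barrierDensity_pos b t).le, barrierDensity, exp_le_one_iff, neg_nonpos]
  exact tailIntegral_nonneg hb0 ht.1

lemma barrier_pos (hb : ContinuousOn b (Ioc 0 1)) (hb0 : ∀ τ ∈ Ioc (0 : ℝ) 1, 0 ≤ b τ)
    {s : ℝ} (hs : 0 < s) : 0 < barrier b s := by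
  have hnn : 0 ≤ᵐ[volume.restrict (Ioc 0 s)] barrierDensity b :=
    ae_of_all _ fun t => (barrierDensity_pos b t).le
  have hsupp : Ioc 0 s ⊆ Function.support (barrierDensity b) :=
    fun t _ => (barrierDensity_pos b t).ne'
  rw [barrier, setIntegral_pos_iff_support_of_nonneg_ae hnn (integrableOn_barrierDensity hb hb0 s),
    inter_eq_right.2 hsupp, volume_Ioc]
  simpa using hs

lemma hasDerivAt_barrier (hb : ContinuousOn b (Ioc 0 1)) (hb0 : ∀ τ ∈ Ioc (0 : ℝ) 1, 0 ≤ b τ)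
    {s : ℝ} (hs : s ∈ Ioo (0 : ℝ) 1) : HasDerivAt (barrier b) (barrierDensity b s) s := by
  have hint : IntervalIntegrable (barrierDensity b) volume 0 s :=
    (intervalIntegrable_iff_integrableOn_Ioc_of_le hs.1.le).2 (integrableOn_barrierDensity hb hb0 s)
  have hcont : ContinuousOn (barrierDensity b) (Ioo 0 1) :=
    fun t ht => (hasDerivAt_barrierDensity hb ht).continuousAt.continuousWithinAt
  refine (intervalIntegral.integral_hasDerivAt_right hint
    (hcont.stronglyMeasurableAtFilter isOpen_Ioo s hs)
    (hcont.continuousAt (Ioo_mem_nhds hs.1 hs.2))).congr_of_eventuallyEq ?_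
  filter_upwards [Ioi_mem_nhds hs.1] with u hu
  rw [barrier, intervalIntegral.integral_of_le (le_of_lt hu)]

lemma barrier_le_mul_barrierDensity (hb : ContinuousOn b (Ioc 0 1))
    (hb0 : ∀ τ ∈ Ioc (0 : ℝ) 1, 0 ≤ b τ) {s : ℝ} (hs : 0 < s) :
    barrier b s ≤ s * barrierDensity b s := by
  calc barrier b s ≤ ∫ _ in Ioc 0 s, barrierDensity b s :=
        setIntegral_mono_on (integrableOn_barrierDensity hb hb0 s)
          (integrableOn_const measure_Ioc_lt_top.ne) measurableSet_Ioc
          fun t ht => barrierDensity_monotoneOn hb hb0 ht.1 hs ht.2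
    _ = s * barrierDensity b s := by
        rw [setIntegral_const, volume_real_Ioc_of_le hs.le, sub_zero, smul_eq_mul]

lemma integrableOn_Ioc_of_tailIntegral_le (hb : ContinuousOn b (Ioc 0 1))
    (hb0 : ∀ τ ∈ Ioc (0 : ℝ) 1, 0 ≤ b τ) {M : ℝ} (hM : ∀ t ∈ Ioc (0 : ℝ) 1, tailIntegral b t ≤ M) :
    IntegrableOn b (Ioc 0 1) := by
  have hpos (n : ℕ) : (0 : ℝ) < 1 / (n + 1) := by positivity
  refine integrableOn_Ioc_of_intervalIntegral_norm_bounded_left (I := M)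
    (fun n => integrableOn_Ioc_one_of_continuousOn hb (hpos n))
    tendsto_one_div_add_atTop_nhds_zero_nat (Eventually.of_forall fun n => ?_)
  have hle : 1 / ((n : ℝ) + 1) ≤ 1 := by
    rw [div_le_one (by positivity)]
    linarith [n.cast_nonneg (α := ℝ)]
  calc ∫ x in Ioc (1 / ((n : ℝ) + 1)) 1, ‖b x‖ = tailIntegral b (1 / (n + 1)) :=
        setIntegral_congr_fun measurableSet_Ioc fun τ hτ =>
          norm_of_nonneg (hb0 τ ⟨(hpos n).trans hτ.1, hτ.2⟩)
    _ ≤ M := hM _ ⟨hpos n, hle⟩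

lemma tendsto_tailIntegral_atTop (hb : ContinuousOn b (Ioc 0 1))
    (hb0 : ∀ τ ∈ Ioc (0 : ℝ) 1, 0 ≤ b τ)
    (hdini : ∫⁻ τ in Ioc (0 : ℝ) 1, ENNReal.ofReal (b τ) = ⊤) :
    Tendsto (tailIntegral b) (𝓝[>] 0) atTop := by
  refine tendsto_atTop.2 fun M => ?_
  by_cases h : ∃ s₀ ∈ Ioc (0 : ℝ) 1, M ≤ tailIntegral b s₀
  · obtain ⟨s₀, hs₀, hM⟩ := h
    filter_upwards [Ioo_mem_nhdsGT hs₀.1] with s hs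
    exact hM.trans (tailIntegral_antitoneOn hb hb0 hs.1 hs₀.1 hs.2.le)
  · push Not at h
    exact absurd hdini
      (integrableOn_Ioc_of_tailIntegral_le hb hb0 fun t ht => (h t ht).le).lintegral_lt_top.ne

lemma tendsto_barrier_div_nhdsGT_zero (hb : ContinuousOn b (Ioc 0 1))
    (hb0 : ∀ τ ∈ Ioc (0 : ℝ) 1, 0 ≤ b τ)
    (hdini : ∫⁻ τ in Ioc (0 : ℝ) 1, ENNReal.ofReal (b τ) = ⊤) :
    Tendsto (fun s => barrier b s / s) (𝓝[>] 0) (𝓝 0) := by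
  have hdensity : Tendsto (barrierDensity b) (𝓝[>] 0) (𝓝 0) :=
    tendsto_exp_neg_atTop_nhds_zero.comp (tendsto_tailIntegral_atTop hb hb0 hdini)
  refine tendsto_of_tendsto_of_tendsto_of_le_of_le' tendsto_const_nhds hdensity ?_ ?_
  · filter_upwards [self_mem_nhdsWithin] with s hs
    exact div_nonneg (barrier_pos hb hb0 hs).le (le_of_lt hs)
  · filter_upwards [self_mem_nhdsWithin] with s hs
    exact (div_le_iff₀ hs).2 ((barrier_le_mul_barrierDensity hb hb0 hs).trans_eq (mul_comm _ _))

end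

theorem statement8_general (ω : ℝ → ℝ) (hpos : ∀ σ ∈ Set.Ioc (0 : ℝ) 1, 0 < ω σ)
    (hcont : ContinuousOn ω (Set.Ioc 0 1)) :
    phiBar ω 0 = 0 ∧
    (∀ s ∈ Set.Ioc (0 : ℝ) 1, 0 < phiBar ω s) ∧
    (∃ φd φdd : ℝ → ℝ, ∀ s ∈ Set.Ioo (0 : ℝ) 1,
      HasDerivAt (phiBar ω) (φd s) s ∧ HasDerivAt φd (φdd s) s ∧
        -φdd s + (ω s / s) * φd s = 0) ∧
    ((∫⁻ τ in Set.Ioc (0 : ℝ) 1, ENNReal.ofReal (ω τ / τ)) = ⊤ →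
      Tendsto (fun s => phiBar ω s / s) (𝓝[>] (0 : ℝ)) (𝓝 0)) := by
  set b : ℝ → ℝ := fun τ => ω τ / τ
  have hb : ContinuousOn b (Ioc 0 1) := hcont.div continuousOn_id fun τ hτ => hτ.1.ne'
  have hb0 : ∀ τ ∈ Ioc (0 : ℝ) 1, 0 ≤ b τ := fun τ hτ => div_nonneg (hpos τ hτ).le hτ.1.le
  rw [phiBar_eq_barrier]
  refine ⟨by simp [barrier], fun s hs => barrier_pos hb hb0 hs.1, ?_,
    tendsto_barrier_div_nhdsGT_zero hb hb0⟩
  exact ⟨barrierDensity b, fun s => barrierDensity b s * b s, fun s hs =>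
    ⟨hasDerivAt_barrier hb hb0 hs, hasDerivAt_barrierDensity hb hs, by ring⟩⟩

/-- the one-dimensional counterexample of Remark 4 / [M11]: for `ω`
continuous, increasing, with `ω(σ)/σ` decreasing, the function
`φ(s) = ∫₀^s exp(-∫_t^1 ω(τ)/τ dτ) dt` vanishes at `0`, is positive on `(0,1]` and solves
`-φ'' + (ω(s)/s) φ' = 0` on `(0,1)`; if `ω` is not Dini continuous at zero
(`∫₀¹ ω(τ)/τ dτ = +∞`) then `φ'(0⁺) = lim_{s→0⁺} φ(s)/s = 0`. -/
theorem statement8 (ω : ℝ → ℝ) (hpos : ∀ σ ∈ Set.Ioc (0 : ℝ) 1, 0 < ω σ)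
    (hcont : ContinuousOn ω (Set.Ioc 0 1)) (hmono : StrictMonoOn ω (Set.Ioc 0 1))
    (hanti : AntitoneOn (fun σ => ω σ / σ) (Set.Ioc 0 1)) :
    phiBar ω 0 = 0 ∧
    (∀ s ∈ Set.Ioc (0 : ℝ) 1, 0 < phiBar ω s) ∧
    (∃ φd φdd : ℝ → ℝ, ∀ s ∈ Set.Ioo (0 : ℝ) 1,
      HasDerivAt (phiBar ω) (φd s) s ∧ HasDerivAt φd (φdd s) s ∧
        -φdd s + (ω s / s) * φd s = 0) ∧
    ((∫⁻ τ in Set.Ioc (0 : ℝ) 1, ENNReal.ofReal (ω τ / τ)) = ⊤ →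
      Tendsto (fun s => phiBar ω s / s) (𝓝[>] (0 : ℝ)) (𝓝 0)) :=
  statement8_general ω hpos hcont
end
end
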